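/- arXiv:2305.08412 — 2 statements merged into one kernel-verified Lean document; each statement's English description precedes it below -/
import Mathlib

section
/- Let S ≥ 1, let ρ¹,…,ρ^S be nonnegative reals with at least one ρ^i > 0, let m₁,…,m_S > 0, and let β_{ij} ≥ 0 with β_{ij} > 0 whenever relevant (β_{ij} = 2π‖b^{ij}‖_{L¹} > 0). Define the S×S matrix M by M_{ij} = (β_{ij}/(m_i+m_j)²) m_j ρ^i for j ≠ i, and M_{ii} = (β_{ii}/(4m_i²)) m_i ρ^i − ∑_{j=1}^S (β_{ij}/(m_i+m_j)²)(2m_i+m_j) ρ^j. Then the transpose of M is strictly diagonally dominant: for every i, |M_{ii}| − ∑_{j≠i} |M_{ji}| = (β_{ii}/(2m_i)) ρ^i + ∑_{j≠i} (β_{ij}/(m_i+m_j)) ρ^j > 0; consequently M is invertible. -/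
open Matrix Finset

/-! The diagonal entry `M i i` is minus a sum of nonnegative terms, one of which,
`β i i / (2 m i) ρ i`, is split off from the self-collision term `j = i`, while the
off-diagonal entries of column `i` are nonnegative. Hence `|M i i| - ∑_{j ≠ i} |M j i|`
is a sum in which each pair of terms combines through `(2a + b - a) / (a + b)² = 1 / (a + b)`,
and it is positive because some `ρ k` is. Column diagonal dominance then gives `det M ≠ 0`
(Gershgorin). -/

theorem Matrix.isUnit_of_sum_abs_col_lt_abs_diag {n : Type*} [Fintype n] [DecidableEq n]
    {A : Matrix n n ℝ} (h : ∀ k, ∑ i ∈ univ.erase k, |A i k| < |A k k|) : IsUnit A := by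
  rw [isUnit_iff_isUnit_det, isUnit_iff_ne_zero]
  exact det_ne_zero_of_sum_col_lt_diag (by simpa only [Real.norm_eq_abs] using h)

lemma self_collision_split {a : ℝ} (ha : a ≠ 0) (β ρ : ℝ) :
    β / (a + a) ^ 2 * (2 * a + a) * ρ = β / (4 * a ^ 2) * a * ρ + β / (2 * a) * ρ := by
  field_simp
  ring

lemma collision_pair_combine {a b : ℝ} (hab : a + b ≠ 0) (β ρ : ℝ) :
    β / (a + b) ^ 2 * (2 * a + b) * ρ - β / (a + b) ^ 2 * a * ρ = β / (a + b) * ρ := by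
  field_simp
  ring

lemma add_sum_erase_pos {ι : Type*} [Fintype ι] [DecidableEq ι] {ρ c : ι → ℝ} {a : ℝ}
    (ha : 0 < a) (hc : ∀ j, 0 < c j) (hρ : ∀ j, 0 ≤ ρ j) (hρpos : ∃ k, 0 < ρ k) (i : ι) :
    0 < a * ρ i + ∑ j ∈ univ.erase i, c j * ρ j := by
  obtain ⟨k, hk⟩ := hρpos
  have hterm : ∀ j, 0 ≤ c j * ρ j := fun j => mul_nonneg (hc j).le (hρ j)
  have hsum : 0 ≤ ∑ j ∈ univ.erase i, c j * ρ j := sum_nonneg fun j _ => hterm j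
  rcases eq_or_ne k i with rfl | hki
  · linarith [mul_pos ha hk]
  · have hk_le : c k * ρ k ≤ ∑ j ∈ univ.erase i, c j * ρ j :=
      single_le_sum (fun j _ => hterm j) (mem_erase.2 ⟨hki, mem_univ k⟩)
    linarith [mul_pos (hc k) hk, mul_nonneg ha.le (hρ i)]

section CollisionMatrix

variable {ι : Type*} {ρ m : ι → ℝ} {β : ι → ι → ℝ} {M : Matrix ι ι ℝ}

lemma abs_collision_offdiag (hρ : ∀ i, 0 ≤ ρ i) (hm : ∀ i, 0 < m i) (hβ : ∀ i j, 0 ≤ β i j)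
    (hβsymm : ∀ i j, β i j = β j i)
    (hMoff : ∀ i j, j ≠ i → M i j = β i j / (m i + m j) ^ 2 * m j * ρ i) {i j : ι} (hji : j ≠ i) :
    |M j i| = β i j / (m i + m j) ^ 2 * m i * ρ j := by
  rw [hMoff j i hji.symm, hβsymm j i, add_comm (m j), abs_of_nonneg]
  have := hβ i j; have := hm i; have := hm j; have := hρ j
  positivity

variable [Fintype ι] [DecidableEq ι]

lemma collision_diag_eq_neg {i : ι} (hmi : m i ≠ 0)
    (hMdiag : M i i = β i i / (4 * m i ^ 2) * m i * ρ i
      - ∑ j, β i j / (m i + m j) ^ 2 * (2 * m i + m j) * ρ j) :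
    M i i = -(β i i / (2 * m i) * ρ i
      + ∑ j ∈ univ.erase i, β i j / (m i + m j) ^ 2 * (2 * m i + m j) * ρ j) := by
  rw [hMdiag, ← sum_erase_add _ _ (mem_univ i), self_collision_split hmi]
  ring

lemma abs_collision_diag (hρ : ∀ i, 0 ≤ ρ i) (hm : ∀ i, 0 < m i) (hβ : ∀ i j, 0 ≤ β i j) {i : ι}
    (hMdiag : M i i = β i i / (4 * m i ^ 2) * m i * ρ i
      - ∑ j, β i j / (m i + m j) ^ 2 * (2 * m i + m j) * ρ j) :
    |M i i| = β i i / (2 * m i) * ρ i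
      + ∑ j ∈ univ.erase i, β i j / (m i + m j) ^ 2 * (2 * m i + m j) * ρ j := by
  have hi := hm i
  rw [collision_diag_eq_neg hi.ne' hMdiag, abs_neg, abs_of_nonneg]
  have hsum : 0 ≤ ∑ j ∈ univ.erase i, β i j / (m i + m j) ^ 2 * (2 * m i + m j) * ρ j :=
    sum_nonneg fun j _ => by have := hβ i j; have := hm j; have := hρ j; positivity
  have := hβ i i; have := hρ i
  positivity

lemma collision_col_dominance_gap (hρ : ∀ i, 0 ≤ ρ i) (hm : ∀ i, 0 < m i)
    (hβ : ∀ i j, 0 ≤ β i j) (hβsymm : ∀ i j, β i j = β j i)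
    (hMoff : ∀ i j, j ≠ i → M i j = β i j / (m i + m j) ^ 2 * m j * ρ i)
    (hMdiag : ∀ i, M i i = β i i / (4 * m i ^ 2) * m i * ρ i
      - ∑ j, β i j / (m i + m j) ^ 2 * (2 * m i + m j) * ρ j) (i : ι) :
    |M i i| - ∑ j ∈ univ.erase i, |M j i|
      = β i i / (2 * m i) * ρ i + ∑ j ∈ univ.erase i, β i j / (m i + m j) * ρ j := by
  rw [abs_collision_diag hρ hm hβ (hMdiag i),
    sum_congr rfl fun j hj => abs_collision_offdiag hρ hm hβ hβsymm hMoff (ne_of_mem_erase hj),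
    add_sub_assoc, ← sum_sub_distrib]
  congr 1
  exact sum_congr rfl fun j _ => collision_pair_combine (add_pos (hm i) (hm j)).ne' _ _

end CollisionMatrix

theorem M_transpose_diagonally_dominant_and_invertible_general
    (S : ℕ)
    (ρ : Fin S → ℝ) (hρnn : ∀ i, 0 ≤ ρ i) (hρpos : ∃ i, 0 < ρ i)
    (m : Fin S → ℝ) (hm : ∀ i, 0 < m i)
    (β : Fin S → Fin S → ℝ) (hβpos : ∀ i j, 0 < β i j)
    (hβsymm : ∀ i j, β i j = β j i)
    (M : Matrix (Fin S) (Fin S) ℝ)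
    (hMoff : ∀ i j, j ≠ i → M i j = β i j / (m i + m j) ^ 2 * m j * ρ i)
    (hMdiag : ∀ i, M i i = β i i / (4 * m i ^ 2) * m i * ρ i
      - ∑ j : Fin S, β i j / (m i + m j) ^ 2 * (2 * m i + m j) * ρ j) :
    (∀ i, |M i i| - ∑ j ∈ univ.erase i, |M j i|
        = β i i / (2 * m i) * ρ i + ∑ j ∈ univ.erase i, β i j / (m i + m j) * ρ j ∧
      0 < |M i i| - ∑ j ∈ univ.erase i, |M j i|) ∧
    IsUnit M := by
  have hgap := collision_col_dominance_gap hρnn hm (fun i j => (hβpos i j).le) hβsymm hMoff hMdiag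
  have hpos : ∀ i, 0 < |M i i| - ∑ j ∈ univ.erase i, |M j i| := fun i => by
    rw [hgap i]
    exact add_sum_erase_pos (div_pos (hβpos i i) (mul_pos two_pos (hm i)))
      (fun j => div_pos (hβpos i j) (add_pos (hm i) (hm j))) hρnn hρpos i
  exact ⟨fun i => ⟨hgap i, hpos i⟩, isUnit_of_sum_abs_col_lt_abs_diag fun i => sub_pos.mp (hpos i)⟩

theorem M_transpose_diagonally_dominant_and_invertible
    (S : ℕ) (hS : 1 ≤ S)
    (ρ : Fin S → ℝ) (hρnn : ∀ i, 0 ≤ ρ i) (hρpos : ∃ i, 0 < ρ i)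
    (m : Fin S → ℝ) (hm : ∀ i, 0 < m i)
    (β : Fin S → Fin S → ℝ) (hβpos : ∀ i j, 0 < β i j)
    (hβsymm : ∀ i j, β i j = β j i)
    (M : Matrix (Fin S) (Fin S) ℝ)
    (hMoff : ∀ i j, j ≠ i → M i j = β i j / (m i + m j) ^ 2 * m j * ρ i)
    (hMdiag : ∀ i, M i i = β i i / (4 * m i ^ 2) * m i * ρ i
      - ∑ j : Fin S, β i j / (m i + m j) ^ 2 * (2 * m i + m j) * ρ j) :
    (∀ i, |M i i| - ∑ j ∈ univ.erase i, |M j i|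
        = β i i / (2 * m i) * ρ i + ∑ j ∈ univ.erase i, β i j / (m i + m j) * ρ j ∧
      0 < |M i i| - ∑ j ∈ univ.erase i, |M j i|) ∧
    IsUnit M :=
  M_transpose_diagonally_dominant_and_invertible_general S ρ hρnn hρpos m hm β hβpos hβsymm M hMoff
    hMdiag
end

section
/- Let S ≥ 2, m₁,…,m_S > 0, ρ¹,…,ρ^S > 0, and let b_{ij} > 0 be symmetric coefficients (b_{ij} = b_{ji}). Suppose p¹,…,p^S ∈ ℝ satisfy ∑_{j=1}^S (b_{ij}/(m_i+m_j)²)(m_j ρ^i p^j − m_i ρ^j p^i) = 0 for all i = 1,…,S. Then there exists θ ∈ ℝ such that m_i p^i/ρ^i = θ for all i. -/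
/-!
Writing `θ i = m i p^i / ρ^i`, the `i`-th compatibility relation reads
`∑ j, w i j (θ j - θ i) = 0` with positive weights `w i j = b i j ρ^i ρ^j / (m i + m j)²`.
At an index where `θ` is maximal every summand is `≤ 0`, so each vanishes and `θ` is constant
(a discrete maximum principle).
-/

open Finset

theorem eq_of_forall_le_of_sum_mul_sub_eq_zero {ι : Type*} [Fintype ι] {w : ι → ℝ} {θ : ι → ℝ}
    {i₀ : ι} (hw : ∀ j, 0 < w j) (hmax : ∀ j, θ j ≤ θ i₀)
    (hsum : ∑ j, w j * (θ j - θ i₀) = 0) (j : ι) : θ j = θ i₀ := by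
  have hnonpos : ∀ k ∈ univ, w k * (θ k - θ i₀) ≤ 0 := fun k _ =>
    mul_nonpos_of_nonneg_of_nonpos (hw k).le (sub_nonpos.mpr (hmax k))
  have hj := (sum_eq_zero_iff_of_nonpos hnonpos).mp hsum j (mem_univ j)
  exact sub_eq_zero.mp ((mul_eq_zero.mp hj).resolve_left (hw j).ne')

theorem exists_eq_const_of_sum_mul_sub_eq_zero {ι : Type*} [Fintype ι] {w : ι → ι → ℝ}
    {θ : ι → ℝ} (hw : ∀ i j, 0 < w i j) (h : ∀ i, ∑ j, w i j * (θ j - θ i) = 0) :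
    ∃ c, ∀ i, θ i = c := by
  cases isEmpty_or_nonempty ι with
  | inl _ => exact ⟨0, isEmptyElim⟩
  | inr _ =>
    obtain ⟨i₀, hi₀⟩ := Finite.exists_max θ
    exact ⟨θ i₀, eq_of_forall_le_of_sum_mul_sub_eq_zero (hw i₀) hi₀ (h i₀)⟩

theorem mul_sub_mul_eq_mul_sub_div {mi mj ρi ρj pi pj : ℝ} (hρi : ρi ≠ 0) (hρj : ρj ≠ 0) :
    mj * ρi * pj - mi * ρj * pi = ρi * ρj * (mj * pj / ρj - mi * pi / ρi) := by
  field_simp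

theorem common_temperature_compatibility_general
    (S : ℕ)
    (m : Fin S → ℝ) (hm : ∀ i, 0 < m i)
    (ρ : Fin S → ℝ) (hρ : ∀ i, 0 < ρ i)
    (b : Fin S → Fin S → ℝ) (hb : ∀ i j, 0 < b i j)
    (p : Fin S → ℝ)
    (hcomp : ∀ i, ∑ j : Fin S,
      b i j / (m i + m j) ^ 2 * (m j * ρ i * p j - m i * ρ j * p i) = 0) :
    ∃ θ : ℝ, ∀ i, m i * p i / ρ i = θ := by
  have hw : ∀ i j, 0 < b i j / (m i + m j) ^ 2 * (ρ i * ρ j) := fun i j =>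
    mul_pos (div_pos (hb i j) (pow_pos (add_pos (hm i) (hm j)) 2)) (mul_pos (hρ i) (hρ j))
  refine exists_eq_const_of_sum_mul_sub_eq_zero hw fun i => ?_
  convert hcomp i using 2 with j
  rw [mul_sub_mul_eq_mul_sub_div (hρ i).ne' (hρ j).ne', mul_assoc]

theorem common_temperature_compatibility
    (S : ℕ) (hS : 2 ≤ S)
    (m : Fin S → ℝ) (hm : ∀ i, 0 < m i)
    (ρ : Fin S → ℝ) (hρ : ∀ i, 0 < ρ i)
    (b : Fin S → Fin S → ℝ) (hb : ∀ i j, 0 < b i j)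
    (hbsymm : ∀ i j, b i j = b j i)
    (p : Fin S → ℝ)
    (hcomp : ∀ i, ∑ j : Fin S,
      b i j / (m i + m j) ^ 2 * (m j * ρ i * p j - m i * ρ j * p i) = 0) :
    ∃ θ : ℝ, ∀ i, m i * p i / ρ i = θ :=
  common_temperature_compatibility_general S m hm ρ hρ b hb p hcomp
end
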